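/- In Example 2.2 (linear SCM with covariates X¹, X², X³ and intercept X⁴), the population OLS coefficient of Y given all covariates equals (0.5, 0.5, 0.5, 0)^⊤ on I₁, (0.8, 0.8, 0.2, 0)^⊤ on I₂, and (−0.2, 0.8, 0.2, 0)^⊤ on I₃, so the time points k₁ and k₂ are both regression change points even though the causal mechanism of Y only changes at k₂. -/

import Mathlib

open MeasureTheory BigOperators

/-- Population Gram matrix `E[X^S (X^S)ᵀ]` restricted to indices in `S`. -/
noncomputable def Gram {Ω : Type*} [MeasurableSpace Ω] (P : Measure Ω) {d : ℕ}
    (X : Ω → Fin (d + 1) → ℝ) (S : Finset (Fin (d + 1))) : Matrix S S ℝ :=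
  Matrix.of fun i j => ∫ ω, X ω i.1 * X ω j.1 ∂P

/-- Population OLS coefficient given the covariate subset `S`:
`β^S = E[X^S (X^S)ᵀ]⁻¹ E[X^S Y]`, with zero entries outside `S`. -/
noncomputable def betaOLS {Ω : Type*} [MeasurableSpace Ω] (P : Measure Ω) {d : ℕ}
    (X : Ω → Fin (d + 1) → ℝ) (Y : Ω → ℝ) (S : Finset (Fin (d + 1))) : Fin (d + 1) → ℝ :=
  fun j =>
    if h : j ∈ S then
      ((Gram P X S)⁻¹.mulVec fun i => ∫ ω, X ω i.1 * Y ω ∂P) ⟨j, h⟩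
    else 0

/-- Population OLS residual given `S`: `ε(S) = Y − Xᵀ β^{OLS}(S)`. -/
noncomputable def resid {Ω : Type*} [MeasurableSpace Ω] (P : Measure Ω) {d : ℕ}
    (X : Ω → Fin (d + 1) → ℝ) (Y : Ω → ℝ) (S : Finset (Fin (d + 1))) : Ω → ℝ :=
  fun ω => Y ω - ∑ j, betaOLS P X Y S j * X ω j

/-!
In every regime `X³ = ε¹ + ε² + ε³ + εʸ` and `Y = a ε¹ + ε² + εʸ`, with `a = 1` on `I₁ ∪ I₂` and
`a = 0` on `I₃`. The noises are centred and uncorrelated, so the second moments of the covariates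
are read off the coefficient matrix, and the normal equations give
`β = (a - t, 1 - t, t, 0)` with `t = σ²_Y / (σ²_3 + σ²_Y)`: `X³` is a noisy proxy for `εʸ`, and
`t` is the share of `εʸ` in the part of `X³` not explained by `X¹, X²`. Here `t = 1/2` on `I₁` and
`t = 1/5` on `I₂, I₃`.
-/

open ProbabilityTheory Matrix
open scoped NNReal

section

variable {Ω : Type*} [MeasurableSpace Ω] {P : Measure Ω}

lemma moments_of_map_eq_gaussianReal {e : Ω → ℝ} {v : ℝ≥0}
    (he : P.map e = gaussianReal 0 v) :
    MemLp e 2 P ∧ ∫ ω, e ω ∂P = 0 ∧ ∫ ω, e ω ^ 2 ∂P = v := by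
  have hlaw : HasLaw e (gaussianReal 0 v) P :=
    ⟨.of_map_ne_zero (by simp [he, IsProbabilityMeasure.ne_zero]), he⟩
  have hmean : ∫ ω, e ω ∂P = 0 := by rw [hlaw.integral_eq, integral_id_gaussianReal]
  refine ⟨?_, hmean, ?_⟩
  · have hid : MemLp id 2 (P.map e) := he ▸ memLp_id_gaussianReal 2
    exact (memLp_map_measure_iff hid.1 hlaw.aemeasurable).mp hid
  · rw [← variance_of_integral_eq_zero hlaw.aemeasurable hmean, hlaw.variance_eq,
      variance_id_gaussianReal]

lemma ProbabilityTheory.iIndepFun.integral_mul_eq_zero {ι : Type*} {f : ι → Ω → ℝ}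
    (hind : iIndepFun f P) (hint : ∀ i, Integrable (f i) P) (hmean : ∀ i, ∫ ω, f i ω ∂P = 0) :
    Pairwise fun i j => ∫ ω, f i ω * f j ω ∂P = 0 := fun i j hij => by
  dsimp only
  rw [(hind.indepFun hij).integral_fun_mul_eq_mul_integral (hint i).1 (hint j).1, hmean i,
    zero_mul]

lemma integral_affine_mul_affine [IsProbabilityMeasure P] {ι : Type*} [Fintype ι]
    {ε : ι → Ω → ℝ} (hL2 : ∀ k, MemLp (ε k) 2 P) (hmean : ∀ k, ∫ ω, ε k ω ∂P = 0)
    (hunc : Pairwise fun k l => ∫ ω, ε k ω * ε l ω ∂P = 0) (a b : ι → ℝ) (α β : ℝ) :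
    ∫ ω, (∑ k, a k * ε k ω + α) * (∑ l, b l * ε l ω + β) ∂P
      = ∑ k, a k * b k * ∫ ω, ε k ω ^ 2 ∂P + α * β := by
  classical
  have hint k : Integrable (ε k) P := (hL2 k).integrable one_le_two
  have hprod k l : Integrable (fun ω => ε k ω * ε l ω) P := (hL2 k).integrable_mul (hL2 l)
  have hsecond k l : ∫ ω, ε k ω * ε l ω ∂P = if k = l then ∫ ω, ε k ω ^ 2 ∂P else 0 := by
    split_ifs with h
    · subst h; simp_rw [sq]
    · exact hunc h
  have hlin (c : ι → ℝ) : Integrable (fun ω => ∑ k, c k * ε k ω) P :=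
    integrable_finsetSum _ fun k _ => (hint k).const_mul (c k)
  have hquad : Integrable (fun ω => ∑ k, ∑ l, a k * b l * (ε k ω * ε l ω)) P :=
    integrable_finsetSum _ fun k _ => integrable_finsetSum _ fun l _ => (hprod k l).const_mul _
  have hlin_zero (c : ι → ℝ) : ∫ ω, ∑ k, c k * ε k ω ∂P = 0 := by
    simp [integral_finsetSum _ fun k _ => (hint k).const_mul (c k), integral_const_mul, hmean]
  have hquad_eq : ∫ ω, ∑ k, ∑ l, a k * b l * (ε k ω * ε l ω) ∂P
      = ∑ k, a k * b k * ∫ ω, ε k ω ^ 2 ∂P := by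
    rw [integral_finsetSum _ fun k _ => integrable_finsetSum _ fun l _ => (hprod k l).const_mul _]
    refine Finset.sum_congr rfl fun k _ => ?_
    simp [integral_finsetSum _ fun l _ => (hprod k l).const_mul _, integral_const_mul, hsecond]
  have hexpand ω : (∑ k, a k * ε k ω + α) * (∑ l, b l * ε l ω + β)
      = ∑ k, ∑ l, a k * b l * (ε k ω * ε l ω)
        + (∑ k, (β * a k) * ε k ω + ∑ l, (α * b l) * ε l ω) + α * β := by
    have : ∑ k, ∑ l, a k * b l * (ε k ω * ε l ω) = (∑ k, a k * ε k ω) * ∑ l, b l * ε l ω := by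
      rw [Finset.sum_mul_sum]
      exact Finset.sum_congr rfl fun k _ => Finset.sum_congr rfl fun l _ => by ring
    rw [this]
    simp only [mul_assoc, ← Finset.mul_sum]
    ring
  simp_rw [hexpand]
  rw [integral_add, integral_add, integral_add, hquad_eq, hlin_zero, hlin_zero]
  · simp
  exacts [hlin _, hlin _, hquad, (hlin _).add (hlin _), hquad.add ((hlin _).add (hlin _)),
    integrable_const _]

lemma betaOLS_univ_eq {d : ℕ} (X : Ω → Fin (d + 1) → ℝ) (Y : Ω → ℝ)
    {G : Matrix (Fin (d + 1)) (Fin (d + 1)) ℝ} {b β : Fin (d + 1) → ℝ}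
    (hG : ∀ i j, ∫ ω, X ω i * X ω j ∂P = G i j) (hb : ∀ i, ∫ ω, X ω i * Y ω ∂P = b i)
    (hdet : IsUnit G.det) (hβ : G *ᵥ β = b) :
    betaOLS P X Y Finset.univ = β := by
  let e : (Finset.univ : Finset (Fin (d + 1))) ≃ Fin (d + 1) :=
    Equiv.subtypeUnivEquiv Finset.mem_univ
  have hGram : Gram P X Finset.univ = G.submatrix e e := by
    ext i j
    exact hG i j
  funext j
  rw [betaOLS, dif_pos (Finset.mem_univ j), hGram, Matrix.inv_submatrix_equiv,
    Matrix.submatrix_mulVec_equiv]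
  change (G⁻¹ *ᵥ fun i => ∫ ω, X ω i * Y ω ∂P) j = β j
  simp_rw [hb, ← hβ, Matrix.mulVec_mulVec, Matrix.nonsing_inv_mul G hdet, Matrix.one_mulVec]

lemma betaOLS_eq_of_uncorrelated_noise [IsProbabilityMeasure P] {f : Fin 4 → Ω → ℝ} {v : Fin 4 → ℝ}
    (hL2 : ∀ k, MemLp (f k) 2 P) (hmean : ∀ k, ∫ ω, f k ω ∂P = 0)
    (hunc : Pairwise fun k l => ∫ ω, f k ω * f l ω ∂P = 0) (hvar : ∀ k, ∫ ω, f k ω ^ 2 ∂P = v k)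
    (hv0 : v 0 ≠ 0) (hv1 : v 1 ≠ 0) (hv23 : v 2 + v 3 ≠ 0) (a : ℝ) :
    betaOLS P (fun ω => ![f 0 ω, f 1 ω, f 0 ω + f 1 ω + f 2 ω + f 3 ω, 1])
        (fun ω => a * f 0 ω + f 1 ω + f 3 ω) Finset.univ
      = ![a - v 3 / (v 2 + v 3), 1 - v 3 / (v 2 + v 3), v 3 / (v 2 + v 3), 0] := by
  let A : Matrix (Fin 4) (Fin 4) ℝ := !![1, 0, 0, 0; 0, 1, 0, 0; 1, 1, 1, 1; 0, 0, 0, 0]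
  let c : Fin 4 → ℝ := ![0, 0, 0, 1]
  have hX ω i : ![f 0 ω, f 1 ω, f 0 ω + f 1 ω + f 2 ω + f 3 ω, 1] i = ∑ k, A i k * f k ω + c i := by
    fin_cases i <;> simp [A, c, Fin.sum_univ_four]
  have hY ω : a * f 0 ω + f 1 ω + f 3 ω = ∑ k, ![a, 1, 0, 1] k * f k ω + 0 := by
    simp [Fin.sum_univ_four]
  let G : Matrix (Fin 4) (Fin 4) ℝ :=
    !![v 0, 0, v 0, 0; 0, v 1, v 1, 0; v 0, v 1, v 0 + v 1 + v 2 + v 3, 0; 0, 0, 0, 1]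
  have hdet : G.det = v 0 * v 1 * (v 2 + v 3) := by
    simp [G, det_succ_row_zero, Fin.sum_univ_succ, Fin.succAbove]
    ring
  refine betaOLS_univ_eq _ _ (G := G) (b := ![a * v 0, v 1, a * v 0 + v 1 + v 3, 0])
    (fun i j => ?_) (fun i => ?_) ?_ ?_
  · simp only [hX]
    rw [integral_affine_mul_affine hL2 hmean hunc]
    fin_cases i <;> fin_cases j <;> simp [A, c, G, Fin.sum_univ_four, hvar]
  · simp only [hX, hY]
    rw [integral_affine_mul_affine hL2 hmean hunc]
    fin_cases i <;> simp [A, c, Fin.sum_univ_four, hvar]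
  · rw [hdet]
    exact (mul_ne_zero (mul_ne_zero hv0 hv1) hv23).isUnit
  · funext i
    fin_cases i <;> simp [G, mulVec, dotProduct, Fin.sum_univ_four] <;> field_simp <;> ring

lemma betaOLS_eq_of_gaussian_noise [IsProbabilityMeasure P] {e1 e2 e3 eY : Ω → ℝ}
    {v1 v2 v3 vY : ℝ≥0} (hind : iIndepFun ![e1, e2, e3, eY] P)
    (he1 : P.map e1 = gaussianReal 0 v1) (he2 : P.map e2 = gaussianReal 0 v2)
    (he3 : P.map e3 = gaussianReal 0 v3) (heY : P.map eY = gaussianReal 0 vY)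
    (hv1 : v1 ≠ 0) (hv2 : v2 ≠ 0) (hv3Y : v3 + vY ≠ 0) (a : ℝ) :
    betaOLS P (fun ω => ![e1 ω, e2 ω, e1 ω + e2 ω + e3 ω + eY ω, 1])
        (fun ω => a * e1 ω + e2 ω + eY ω) Finset.univ
      = ![a - vY / (v3 + vY), 1 - vY / (v3 + vY), vY / (v3 + vY), 0] := by
  have hmom k : MemLp (![e1, e2, e3, eY] k) 2 P ∧ ∫ ω, ![e1, e2, e3, eY] k ω ∂P = 0 ∧
      ∫ ω, ![e1, e2, e3, eY] k ω ^ 2 ∂P = ![v1, v2, v3, vY] k := by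
    fin_cases k
    exacts [moments_of_map_eq_gaussianReal he1, moments_of_map_eq_gaussianReal he2,
      moments_of_map_eq_gaussianReal he3, moments_of_map_eq_gaussianReal heY]
  exact betaOLS_eq_of_uncorrelated_noise (fun k => (hmom k).1) (fun k => (hmom k).2.1)
    (hind.integral_mul_eq_zero (fun k => (hmom k).1.integrable one_le_two) fun k => (hmom k).2.1)
    (fun k => (hmom k).2.2) (by simpa using hv1) (by simpa using hv2)
    (by exact_mod_cast hv3Y) a

end

/-- **Example 2.2: population OLS coefficients and regression change points.**
Three regimes `r = 0, 1, 2` (intervals `I₁, I₂, I₃`) of a linear SCM with intercept `X⁴ = 1`: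
`X¹ = ε¹`, `X² = ε²`; in regimes 0 and 1, `Y = X¹ + X² + ε^Y` and `X³ = Y + ε³`; in regime 2,
`Y = X² + ε^Y` and `X³ = X¹ + Y + ε³`.  Noise variances: all 1 in regime 0; in regimes 1 and
2, `Var(ε¹) = Var(ε^Y) = 1` and `Var(ε²) = Var(ε³) = 4`.  The population OLS coefficient of
`Y` given all covariates equals `(0.5, 0.5, 0.5, 0)ᵀ`, `(0.8, 0.8, 0.2, 0)ᵀ`, and
`(−0.2, 0.8, 0.2, 0)ᵀ` in the three regimes; in particular it changes at both `k₁` and `k₂`,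
so both are regression change points (though the causal mechanism of `Y` only changes at `k₂`). -/
theorem example_lscm_ols_values
    {Ω : Type*} [MeasurableSpace Ω] (P : Measure Ω) [IsProbabilityMeasure P]
    (e1 e2 e3 eY : Fin 3 → Ω → ℝ)
    (v1 : Fin 3 → NNReal) (hv1 : v1 = ![1, 1, 1])
    (v2 : Fin 3 → NNReal) (hv2 : v2 = ![1, 4, 4])
    (v3 : Fin 3 → NNReal) (hv3 : v3 = ![1, 4, 4])
    (vY : Fin 3 → NNReal) (hvY : vY = ![1, 1, 1])
    (hind : ∀ r, ProbabilityTheory.iIndepFun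
      ![e1 r, e2 r, e3 r, eY r] P)
    (he1 : ∀ r, Measure.map (e1 r) P = ProbabilityTheory.gaussianReal 0 (v1 r))
    (he2 : ∀ r, Measure.map (e2 r) P = ProbabilityTheory.gaussianReal 0 (v2 r))
    (he3 : ∀ r, Measure.map (e3 r) P = ProbabilityTheory.gaussianReal 0 (v3 r))
    (heY : ∀ r, Measure.map (eY r) P = ProbabilityTheory.gaussianReal 0 (vY r))
    (Y : Fin 3 → Ω → ℝ)
    (hY : ∀ r ω, Y r ω = (if (r : ℕ) < 2 then e1 r ω else 0) + e2 r ω + eY r ω)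
    (X3 : Fin 3 → Ω → ℝ)
    (hX3 : ∀ r ω, X3 r ω = (if (r : ℕ) = 2 then e1 r ω else 0) + Y r ω + e3 r ω)
    (X : Fin 3 → Ω → Fin 4 → ℝ)
    (hX : ∀ r ω, X r ω = ![e1 r ω, e2 r ω, X3 r ω, 1]) :
    betaOLS P (X 0) (Y 0) Finset.univ = ![0.5, 0.5, 0.5, 0] ∧
    betaOLS P (X 1) (Y 1) Finset.univ = ![0.8, 0.8, 0.2, 0] ∧
    betaOLS P (X 2) (Y 2) Finset.univ = ![-0.2, 0.8, 0.2, 0] ∧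
    betaOLS P (X 0) (Y 0) Finset.univ ≠ betaOLS P (X 1) (Y 1) Finset.univ ∧
    betaOLS P (X 1) (Y 1) Finset.univ ≠ betaOLS P (X 2) (Y 2) Finset.univ := by
  have hX' r : X r = fun ω => ![e1 r ω, e2 r ω, e1 r ω + e2 r ω + e3 r ω + eY r ω, 1] := by
    funext ω
    fin_cases r <;> simp [hX, hX3, hY] <;> ring
  have hY' r : Y r = fun ω => (if (r : ℕ) < 2 then 1 else 0) * e1 r ω + e2 r ω + eY r ω := by
    funext ω
    fin_cases r <;> simp [hY]
  have hβ r : betaOLS P (X r) (Y r) Finset.univ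
      = ![(if (r : ℕ) < 2 then 1 else 0) - (vY r : ℝ) / (v3 r + vY r),
        1 - (vY r : ℝ) / (v3 r + vY r), (vY r : ℝ) / (v3 r + vY r), 0] := by
    rw [hX', hY']
    exact betaOLS_eq_of_gaussian_noise (hind r) (he1 r) (he2 r) (he3 r) (heY r)
      (by rw [hv1]; fin_cases r <;> simp) (by rw [hv2]; fin_cases r <;> simp)
      (by rw [hv3, hvY]; fin_cases r <;> simp) _
  have h0 : betaOLS P (X 0) (Y 0) Finset.univ = ![0.5, 0.5, 0.5, 0] := by
    rw [hβ, hv3, hvY]; norm_num [Matrix.cons_val_two]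
  have h1 : betaOLS P (X 1) (Y 1) Finset.univ = ![0.8, 0.8, 0.2, 0] := by
    rw [hβ, hv3, hvY]; norm_num [Matrix.cons_val_two]
  have h2 : betaOLS P (X 2) (Y 2) Finset.univ = ![-0.2, 0.8, 0.2, 0] := by
    rw [hβ, hv3, hvY]; norm_num [Matrix.cons_val_two]
  refine ⟨h0, h1, h2, ?_, ?_⟩
  · rw [h0, h1]; intro h; norm_num [funext_iff, Fin.forall_fin_succ] at h
  · rw [h1, h2]; intro h; norm_num [funext_iff, Fin.forall_fin_succ] at h
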